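/- arXiv:2301.10194 — 2 statements merged into one kernel-verified Lean document; each statement's English description precedes it below -/
import Mathlib

section
/- Let T be a time series of length n (a function from {0,…,n−1} to ℝ), let d ≥ 1 be a dilation rate and l ≥ 1 a window length. Let T′ be the reordered time series obtained by concatenating the down-sampled series of T at offsets 0, 1, …, d−1 (each down-sampled series at offset r lists T(r), T(r+d), T(r+2d), … for all indices r+k·d < n). Then every dilated window of T of length l with dilation d is a sliding window of T′ of length l: for every offset i with i + (l−1)·d < n there exists a position j with j + l ≤ n such that for all k < l, T′(j+k) = T(i + k·d). -/
/-!
Write `i = r + q * d` with `r < d`. The dilated window at `i` consists of the entries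
`q, …, q + l - 1` of the down-sampled series at offset `r`, which sits as a contiguous block
inside `T′`. The block ends before position `n` because the down-sampled series at the offsets
`0, …, d - 1` split `{0, …, n - 1}` by residue mod `d`, so `T′` has length exactly `n`.
-/

/-- The down-sampled series of a time series `T` (of length `n`) by rate `d` at offset `r`:
the finite sequence whose `k`-th entry is `T (r + k * d)`, with one entry for each
natural number `k` with `r + k * d < n`. -/
noncomputable def downSample (T : ℕ → ℝ) (n d r : ℕ) : List ℝ :=
  (List.range (Nat.card {k : ℕ | r + k * d < n})).map (fun k => T (r + k * d))

/-- The reordered time series `T′`: the concatenation, for `r = 0, 1, …, d-1` in order,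
of the down-sampled series of `T` by rate `d` at offset `r`. -/
noncomputable def reorder (T : ℕ → ℝ) (n d : ℕ) : List ℝ :=
  ((List.range d).map (fun r => downSample T n d r)).flatten

open Finset

theorem List.range'_infix_range {q l c : ℕ} (h : q + l ≤ c) :
    List.range' q l <:+: List.range c := by
  rw [List.range_eq_range', show c = q + (l + (c - (q + l))) by omega, ← List.range'_append_1,
    ← List.range'_append_1, zero_add]
  exact List.infix_append' _ _ _

theorem Nat.lt_sub_ceilDiv_iff {n d r k : ℕ} (hd : 0 < d) : k < (n - r) ⌈/⌉ d ↔ r + k * d < n := by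
  rw [← not_le, ceilDiv_le_iff_le_mul hd, mul_comm]
  omega

theorem Nat.card_filter_range_mod_eq {n d r : ℕ} (hr : r < d) :
    #{m ∈ range n | m % d = r} = (n - r) ⌈/⌉ d := by
  have hd : 0 < d := by omega
  have hinj : Function.Injective fun k => r + k * d := fun a b h => by simpa [hd.ne'] using h
  calc #{m ∈ range n | m % d = r} = #((range ((n - r) ⌈/⌉ d)).image fun k => r + k * d) := by
        congr 1
        ext m
        simp only [mem_filter, mem_range, mem_image, Nat.lt_sub_ceilDiv_iff hd]
        constructor
        · rintro ⟨hm, rfl⟩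
          exact ⟨m / d, by rwa [Nat.mod_add_div' m d], Nat.mod_add_div' m d⟩
        · rintro ⟨k, hk, rfl⟩
          exact ⟨hk, by simp [Nat.mod_eq_of_lt hr]⟩
    _ = (n - r) ⌈/⌉ d := by rw [Finset.card_image_of_injective _ hinj, Finset.card_range]

theorem downSample_eq_map_range (T : ℕ → ℝ) {n d : ℕ} (hd : 0 < d) (r : ℕ) :
    downSample T n d r = (List.range ((n - r) ⌈/⌉ d)).map fun k => T (r + k * d) := by
  have : {k : ℕ | r + k * d < n} = Set.Iio ((n - r) ⌈/⌉ d) := by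
    ext k; exact (Nat.lt_sub_ceilDiv_iff hd).symm
  simp [downSample, this]

theorem length_reorder (T : ℕ → ℝ) {n d : ℕ} (hd : 0 < d) : (reorder T n d).length = n := by
  calc (reorder T n d).length = ∑ r ∈ range d, (n - r) ⌈/⌉ d := by
        rw [reorder, List.length_flatten, List.map_map, ← List.sum_toFinset _ List.nodup_range,
          List.toFinset_range]
        simp [downSample_eq_map_range T hd]
    _ = ∑ r ∈ range d, #{m ∈ range n | m % d = r} :=
        sum_congr rfl fun r hr => (Nat.card_filter_range_mod_eq (mem_range.1 hr)).symm
    _ = n := by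
      rw [← card_eq_sum_card_fiberwise (fun m _ => by simpa using Nat.mod_lt m hd), card_range]

theorem dilated_window_is_sliding_window_of_reorder_general
    (T : ℕ → ℝ) (n d l : ℕ) (hd : 1 ≤ d)
    (i : ℕ) (hi : i + (l - 1) * d < n) :
    ∃ j, j + l ≤ n ∧ ∀ k < l, (reorder T n d)[j + k]? = some (T (i + k * d)) := by
  obtain ⟨r, q, hr, rfl⟩ : ∃ r q, r < d ∧ r + q * d = i :=
    ⟨i % d, i / d, Nat.mod_lt i hd, Nat.mod_add_div' i d⟩
  have hq : q + l ≤ (n - r) ⌈/⌉ d := by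
    have hlast : r + (q + l - 1) * d < n := by
      refine lt_of_le_of_lt ?_ hi
      rw [add_assoc, ← add_mul]
      gcongr
      omega
    have := (Nat.lt_sub_ceilDiv_iff hd).2 hlast
    omega
  have hsub : downSample T n d r <:+: reorder T n d :=
    List.infix_of_mem_flatten (List.mem_map_of_mem (List.mem_range.2 hr))
  rw [downSample_eq_map_range T hd] at hsub
  obtain ⟨j, hj, hget⟩ :=
    List.infix_iff_getElem?.1 (((List.range'_infix_range hq).map _).trans hsub)
  simp only [List.length_map, List.length_range', length_reorder T hd] at hj hget
  refine ⟨j, by omega, fun k hk => ?_⟩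
  rw [add_comm j, hget k hk]
  simp [add_mul, add_assoc]

/-- Every dilated window of `T` of length `l` with dilation `d` is a sliding window of the
reordered series `T′`: for every offset `i` with `i + (l-1)·d < n` there is a position `j`
with `j + l ≤ n` such that for all `k < l`, `T′(j + k) = T (i + k·d)`. -/
theorem dilated_window_is_sliding_window_of_reorder
    (T : ℕ → ℝ) (n d l : ℕ) (hd : 1 ≤ d) (hl : 1 ≤ l)
    (i : ℕ) (hi : i + (l - 1) * d < n) :
    ∃ j, j + l ≤ n ∧ ∀ k < l, (reorder T n d)[j + k]? = some (T (i + k * d)) :=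
  dilated_window_is_sliding_window_of_reorder_general T n d l hd i hi
end

section
/- Let T be a time series of length n, d ≥ 1 a dilation rate, and l ≥ 1 a window length, and suppose n ≥ (l−1)·d + 1. Refined form of the dilation-mapping theorem with an explicit position: write an offset i with i + (l−1)·d < n as i = r + q·d with 0 ≤ r < d. Then the dilated window of T of length l with dilation d at offset i occurs as the sliding window of the reordered series T′ of length l starting at position j = (∑_{s=0}^{r−1} ⌈(n−s)/d⌉) + q; that is, for all k < l, T′(j + k) = T(i + k·d). -/
lemma aux_lt_iff {n d r p : ℕ} (hd : 1 ≤ d) :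
    r + p * d < n ↔ p < (n - r + d - 1) / d := by
  rcases le_or_gt n r with h | h
  · have h1 : (n - r + d - 1) / d = 0 := by
      apply Nat.div_eq_of_lt; omega
    constructor
    · intro hh; omega
    · intro hh; omega
  · have key : r + p * d < n ↔ p ≤ (n - r - 1) / d := by
      rw [Nat.le_div_iff_mul_le hd]
      omega
    have h2 : (n - r + d - 1) / d = (n - r - 1) / d + 1 := by
      have : n - r + d - 1 = (n - r - 1) + 1 * d := by omega
      rw [this, Nat.add_mul_div_right _ _ hd]
    rw [key, h2]
    omega

lemma card_eq {n d r : ℕ} (hd : 1 ≤ d) :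
    Nat.card {k : ℕ | r + k * d < n} = (n - r + d - 1) / d := by
  have : {k : ℕ | r + k * d < n} = Set.Iio ((n - r + d - 1) / d) := by
    ext k; simpa [Set.mem_Iio] using aux_lt_iff hd
  rw [this]; simp

lemma downSample_length {T : ℕ → ℝ} {n d r : ℕ} (hd : 1 ≤ d) :
    (downSample T n d r).length = (n - r + d - 1) / d := by
  simp only [downSample, List.length_map, List.length_range]
  exact card_eq hd

lemma flatten_getElem? (L : List (List ℝ)) (r p : ℕ) (hr : r < L.length)
    (hp : p < L[r].length) :
    L.flatten[((L.map List.length).take r).sum + p]? = L[r][p]? := by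
  rw [← List.getElem?_drop, List.drop_sum_flatten, List.drop_eq_getElem_cons hr]
  simp only [List.flatten_cons]
  rw [List.getElem?_append_left hp]

/-- Refined dilation-mapping theorem with an explicit position: write an offset `i` with
`i + (l-1)·d < n` as `i = r + q·d` with `0 ≤ r < d`. Then the dilated window of `T` of
length `l` with dilation `d` at offset `i` occurs as the sliding window of `T′` of length
`l` starting at position `j = (∑_{s=0}^{r-1} ⌈(n-s)/d⌉) + q`, where
`⌈a/b⌉ = (a + b - 1) / b`: for all `k < l`, `T′(j + k) = T (i + k·d)`. -/
theorem dilated_window_explicit_position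
    (T : ℕ → ℝ) (n d l : ℕ) (hd : 1 ≤ d) (hl : 1 ≤ l) (hn : (l - 1) * d + 1 ≤ n)
    (i r q : ℕ) (hr : r < d) (hiq : i = r + q * d) (hi : i + (l - 1) * d < n) :
    ∀ k < l,
      (reorder T n d)[(∑ s ∈ Finset.range r, (n - s + d - 1) / d) + q + k]? =
        some (T (i + k * d)) := by
  intro k hk
  set L := (List.range d).map (fun s => downSample T n d s) with hL
  have hrL : r < L.length := by simp [hL, hr]
  have hLr : L[r] = downSample T n d r := by simp [hL]
  -- the value fits in block r
  have hikd : i + k * d < n := by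
    have : k * d ≤ (l - 1) * d := Nat.mul_le_mul_right d (by omega)
    omega
  have hval : r + (q + k) * d < n := by
    have : r + (q + k) * d = i + k * d := by rw [hiq]; ring_nf
    omega
  have hp : q + k < (downSample T n d r).length := by
    rw [downSample_length hd]
    exact (aux_lt_iff hd).mp hval
  have hp' : q + k < L[r].length := by rw [hLr]; exact hp
  -- the sum of lengths
  have hsum : ((L.map List.length).take r).sum = ∑ s ∈ Finset.range r, (n - s + d - 1) / d := by
    rw [hL, List.map_map]
    have : ((List.range d).map (List.length ∘ fun s => downSample T n d s)) =
        (List.range d).map (fun s => (n - s + d - 1) / d) := by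
      apply List.map_congr_left
      intro s _
      exact downSample_length hd
    rw [this, ← List.map_take, List.take_range, Nat.min_eq_left hr.le]
    rfl
  have hidx : (∑ s ∈ Finset.range r, (n - s + d - 1) / d) + q + k =
      ((L.map List.length).take r).sum + (q + k) := by rw [hsum]; ring
  rw [show reorder T n d = L.flatten from rfl, hidx, flatten_getElem? L r (q + k) hrL hp']
  rw [hLr]
  have : (downSample T n d r)[q + k]? = some (T (r + (q + k) * d)) := by
    rw [downSample]
    rw [List.getElem?_map, List.getElem?_range (by simpa [downSample] using hp)]
    rfl
  rw [this]
  congr 1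
  rw [hiq]; ring_nf
end
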